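/- Call an element w of U_X irreducible if there do not exist u, v ∈ U_X with w = uv. Then w ∈ U_X is irreducible if and only if w is a one-letter word x with x ∈ X, or w = u⁻¹ for some u ∈ U_X. -/
import Mathlib


/-- The opening symbol λ. -/
def lam (X : Type*) : X ⊕ Bool := Sum.inr false

/-- The closing symbol ρ. -/
def rho (X : Type*) : X ⊕ Bool := Sum.inr true

/-- For a word `u`, the word `u⁻¹ = λ u ρ`. -/
def winv {X : Type*} (u : List (X ⊕ Bool)) : List (X ⊕ Bool) :=
  [lam X] ++ u ++ [rho X]

/-- `U_X`: the least subset of `Y⁺` containing the one-letter words from `X`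
and closed under concatenation and `u ↦ u⁻¹`. -/
inductive UX (X : Type*) : List (X ⊕ Bool) → Prop
  | var (x : X) : UX X [Sum.inl x]
  | mul {u v : List (X ⊕ Bool)} : UX X u → UX X v → UX X (u ++ v)
  | inv {u : List (X ⊕ Bool)} : UX X u → UX X (winv u)

/-- Balance count: λ counts +1, ρ counts -1. -/
def bal {X : Type*} (l : List (X ⊕ Bool)) : ℤ :=
  (l.map (fun a => match a with
    | Sum.inl _ => (0 : ℤ)
    | Sum.inr false => 1
    | Sum.inr true => -1)).sum

lemma bal_append {X : Type*} (l₁ l₂ : List (X ⊕ Bool)) :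
    bal (l₁ ++ l₂) = bal l₁ + bal l₂ := by
  simp [bal]

lemma bal_cons {X : Type*} (a : X ⊕ Bool) (l : List (X ⊕ Bool)) :
    bal (a :: l) = bal [a] + bal l := by
  simp [bal]

lemma winv_eq {X : Type*} (u : List (X ⊕ Bool)) :
    winv u = lam X :: (u ++ [rho X]) := by simp [winv]

lemma UX.ne_nil {X : Type*} {w : List (X ⊕ Bool)} (hw : UX X w) : w ≠ [] := by
  induction hw with
  | var x => simp
  | mul hu hv ihu ihv => simp [ihu]
  | inv hu ih => simp [winv]

lemma UX.bal_eq_zero {X : Type*} {w : List (X ⊕ Bool)} (hw : UX X w) : bal w = 0 := by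
  induction hw with
  | var x => simp [bal]
  | mul hu hv ihu ihv => rw [bal_append, ihu, ihv]; ring
  | inv hu ih =>
    rw [winv, bal_append, bal_append, ih]
    simp [bal, lam, rho]

lemma UX.bal_prefix_nonneg {X : Type*} {w : List (X ⊕ Bool)} (hw : UX X w) :
    ∀ p : List (X ⊕ Bool), p <+: w → 0 ≤ bal p := by
  induction hw with
  | var x =>
    rintro p ⟨s, hs⟩
    match p, s, hs with
    | [], _, _ => simp [bal]
    | [a], [], h => simp at h; simp [h, bal]
  | @mul u v hu hv ihu ihv =>
    rintro p ⟨s, hs⟩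
    rcases List.append_eq_append_iff.mp hs with ⟨a', ha', _⟩ | ⟨c', hc', hd⟩
    · exact ihu p ⟨a', ha'.symm⟩
    · rw [hc', bal_append, hu.bal_eq_zero, zero_add]
      exact ihv c' ⟨s, hd.symm⟩
  | @inv u hu ih =>
    rintro p ⟨s, hs⟩
    match p with
    | [] => simp [bal]
    | h :: t =>
      rw [winv_eq, List.cons_append] at hs
      obtain ⟨rfl, hts⟩ := List.cons.inj hs
      rw [bal_cons]
      have hl : bal [lam X] = 1 := by simp [bal, lam]
      rw [hl]
      rcases List.append_eq_append_iff.mp hts with ⟨a', ha', _⟩ | ⟨c', hc', hd⟩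
      · have := ih t ⟨a', ha'.symm⟩; omega
      · rw [hc', bal_append, hu.bal_eq_zero, zero_add]
        have hc'p : c' <+: [rho X] := ⟨s, hd.symm⟩
        have : bal c' ≥ -1 := by
          match c', hc'p with
          | [], _ => simp [bal]
          | [a], hp =>
            have : a = rho X := by
              rcases hp with ⟨s', hs'⟩
              simpa using congrArg (fun l => l.head?) hs'
            simp [this, bal, rho]
        omega

theorem stmt1 {X : Type*} {w : List (X ⊕ Bool)} (hw : UX X w) :
    (¬ ∃ u v : List (X ⊕ Bool), UX X u ∧ UX X v ∧ w = u ++ v) ↔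
      ((∃ x : X, w = [Sum.inl x]) ∨ (∃ u : List (X ⊕ Bool), UX X u ∧ w = winv u)) := by
  constructor
  · intro hirr
    cases hw with
    | var x => exact Or.inl ⟨x, rfl⟩
    | mul hu hv => exact absurd ⟨_, _, hu, hv, rfl⟩ hirr
    | inv hu => exact Or.inr ⟨_, hu, rfl⟩
  · rintro (⟨x, rfl⟩ | ⟨u, hu, rfl⟩) ⟨a, b, ha, hb, hab⟩
    · have h1 : 1 ≤ a.length := List.length_pos_iff.mpr ha.ne_nil
      have h2 : 1 ≤ b.length := List.length_pos_iff.mpr hb.ne_nil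
      have := congrArg List.length hab
      simp at this; omega
    · obtain ⟨h, t, rfl⟩ : ∃ h t, a = h :: t := by
        cases a with
        | nil => exact absurd rfl ha.ne_nil
        | cons h t => exact ⟨h, t, rfl⟩
      rw [winv_eq, List.cons_append] at hab
      obtain ⟨hh, hts⟩ := List.cons.inj hab
      -- hh : lam X = h, hts : u ++ [rho X] = t ++ b
      have hblen : 1 ≤ b.length := List.length_pos_iff.mpr hb.ne_nil
      have hlen : t.length ≤ u.length := by
        have := congrArg List.length hts
        simp at this; omega
      have htp : t <+: u := by
        have h1 : t <+: u ++ [rho X] := ⟨b, hts.symm⟩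
        obtain ⟨s, hs⟩ := h1
        refine ⟨s.take (u.length - t.length), ?_⟩
        have := congrArg (fun l => l.take u.length) hs
        simpa [List.take_append, List.take_of_length_le hlen] using this
      have h0 : 0 ≤ bal t := hu.bal_prefix_nonneg t htp
      have hba : bal (h :: t) = 0 := ha.bal_eq_zero
      rw [← hh, bal_cons] at hba
      have hl : bal [lam X] = 1 := by simp [bal, lam]
      omega
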